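/- Let q ≥ 3 be an integer and for n ≥ 1 set a_q(n) = #{(u,v) : 1 ≤ u,v ≤ q, uv = n}. There is an absolute constant C > 0 such that for all q ≥ 3, |∑_{ℓ=1, (ℓ,q)=1}^{q} (∑_{n ≤ q², n ≡ ℓ (mod q)} a_q(n)/n)² − ∑_{ℓ=1, (ℓ,q)=1}^{q} d(ℓ)²/ℓ²| ≤ C · log⁴(q+2)/√q, where d is the divisor function. -/

import Mathlib

/-!
Write `S_ℓ` for the inner sum and `H = ∑_{u ≤ q} 1/u ≤ 1 + log q`. Since `a_q(n)/n` is the sum of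
`1/(uv)` over the factorizations `n = uv`, `S_ℓ` is the sum of `1/(uv)` over the pairs
`u, v ≤ q` with `uv ≡ ℓ (mod q)`. The pairs with `uv ≤ q` are those with `uv = ℓ` and contribute
`d(ℓ)/ℓ`; for the others, `1/(uv) = (1/u + 1/v)/(u + v) ≤ (1/u + 1/v)/(2√q)`. As `ℓ` is a unit
mod `q`, each `u` has at most one partner `v` and vice versa, so the tail is at most `H/√q`.
Hence `S_ℓ² - (d(ℓ)/ℓ)² ≤ 2 (H/√q) S_ℓ`, and summing over `ℓ`, with `∑_ℓ S_ℓ ≤ H²`, bounds the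
difference by `2H³/√q`.
-/

/-- `a_q(n) = #{(u,v) : 1 ≤ u,v ≤ q, uv = n}`, the number of ordered factorizations
of `n` with both factors between `1` and `q`. -/
def aFac (q n : ℕ) : ℕ :=
  ((Finset.Icc 1 q ×ˢ Finset.Icc 1 q).filter (fun p => p.1 * p.2 = n)).card

open Finset Real

lemma inv_mul_le_inv_add_inv_div_two_sqrt {x y a : ℝ} (hx : 0 < x) (hy : 0 < y) (ha : 0 < a)
    (h : a ≤ x * y) : (x * y)⁻¹ ≤ (x⁻¹ + y⁻¹) / (2 * √a) := by
  have hsum : 2 * √a ≤ x + y := by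
    nlinarith [sq_sqrt ha.le, sqrt_nonneg a, sq_nonneg (x - y)]
  calc (x * y)⁻¹ = (x⁻¹ + y⁻¹) / (x + y) := by field_simp; ring
    _ ≤ (x⁻¹ + y⁻¹) / (2 * √a) := by gcongr

lemma one_le_log_add_two {x : ℝ} (hx : 1 ≤ x) : 1 ≤ log (x + 2) := by
  rw [le_log_iff_exp_le (by positivity)]
  linarith [exp_one_lt_d9]

lemma sum_Icc_inv_le_two_mul_log {n : ℕ} (hn : 1 ≤ n) :
    ∑ d ∈ Icc 1 n, (d : ℝ)⁻¹ ≤ 2 * log (n + 2) := by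
  have harm : ∑ d ∈ Icc 1 n, (d : ℝ)⁻¹ ≤ 1 + log n := by
    simpa [harmonic_eq_sum_Icc] using harmonic_le_one_add_log n
  have hlog : log n ≤ log (n + 2) := log_le_log (by positivity) (by linarith)
  linarith [one_le_log_add_two (x := n) (by exact_mod_cast hn)]

lemma sum_comp_le_sum_of_injOn {ι κ M : Type*} [AddCommMonoid M] [PartialOrder M]
    [IsOrderedAddMonoid M] {s : Finset ι} {t : Finset κ} {g : ι → κ} {f : κ → M} (hg : Set.InjOn g s) (hst : ∀ i ∈ s, g i ∈ t) (hf : ∀ k ∈ t, 0 ≤ f k) :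
    ∑ i ∈ s, f (g i) ≤ ∑ k ∈ t, f k := by
  classical
  rw [← sum_image hg]
  exact sum_le_sum_of_subset_of_nonneg (image_subset_iff.2 hst) fun k hk _ => hf k hk

lemma natCast_injOn_Icc (q : ℕ) : Set.InjOn (Nat.cast : ℕ → ZMod q) (Icc 1 q) := by
  intro a ha b hb h
  simp only [coe_Icc, Set.mem_Icc] at ha hb
  refine ((ZMod.natCast_eq_natCast_iff a b q).1 h).eq_of_abs_lt ?_
  rw [abs_lt]
  constructor <;> omega

lemma eq_of_natCast_mul_eq_of_coprime {q ℓ u v w : ℕ} (hℓ : ℓ.Coprime q)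
    (hv : v ∈ Icc 1 q) (hw : w ∈ Icc 1 q)
    (huv : ((u * v : ℕ) : ZMod q) = ℓ) (huw : ((u * w : ℕ) : ZMod q) = ℓ) : v = w := by
  push_cast at huv huw
  have hu : IsUnit (u : ZMod q) :=
    isUnit_of_mul_isUnit_left (huv ▸ (ZMod.isUnit_iff_coprime ℓ q).2 hℓ)
  exact natCast_injOn_Icc q hv hw (hu.mul_left_cancel (huv.trans huw.symm))

lemma aFac_eq_card_divisors {q n : ℕ} (hn : n ≠ 0) (hnq : n ≤ q) :
    aFac q n = n.divisors.card := by
  suffices {p ∈ Icc 1 q ×ˢ Icc 1 q | p.1 * p.2 = n} = n.divisorsAntidiagonal by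
    rw [aFac, this, ← Nat.map_div_right_divisors, card_map]
  ext ⟨u, v⟩
  simp only [mem_filter, mem_product, mem_Icc, Nat.mem_divisorsAntidiagonal]
  constructor
  · rintro ⟨-, huv⟩
    exact ⟨huv, hn⟩
  · rintro ⟨rfl, -⟩
    have hu := Nat.le_of_dvd (Nat.pos_of_ne_zero hn) (dvd_mul_right u v)
    have hv := Nat.le_of_dvd (Nat.pos_of_ne_zero hn) (dvd_mul_left v u)
    refine ⟨⟨⟨?_, ?_⟩, ?_, ?_⟩, rfl⟩ <;> grind

lemma sum_filter_aFac_div_eq (q : ℕ) (P : ℕ → Prop) [DecidablePred P] :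
    ∑ n ∈ Icc 1 (q ^ 2) with P n, (aFac q n : ℝ) / n =
      ∑ p ∈ Icc 1 q ×ˢ Icc 1 q with P (p.1 * p.2), ((p.1 : ℝ) * p.2)⁻¹ := by
  symm
  rw [← sum_fiberwise_of_maps_to (g := fun p : ℕ × ℕ => p.1 * p.2)
    (t := {n ∈ Icc 1 (q ^ 2) | P n})]
  · refine sum_congr rfl fun n hn => ?_
    have hPn : P n := (mem_filter.1 hn).2
    rw [filter_filter, div_eq_mul_inv, aFac, ← nsmul_eq_mul, ← sum_const]
    refine sum_congr (filter_congr fun p _ => ?_) fun p hp => ?_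
    · exact ⟨fun h => h.2, fun h => ⟨h ▸ hPn, h⟩⟩
    · rw [← (mem_filter.1 hp).2]
      push_cast
      rfl
  · intro p hp
    simp only [mem_filter, mem_product, mem_Icc] at hp ⊢
    refine ⟨⟨Nat.mul_pos (by omega) (by omega), ?_⟩, hp.2⟩
    rw [sq]
    exact Nat.mul_le_mul hp.1.1.2 hp.1.2.2

noncomputable def classSum (q ℓ : ℕ) : ℝ :=
  ∑ n ∈ (Icc 1 (q ^ 2)).filter (fun n : ℕ => (n : ZMod q) = ℓ), (aFac q n : ℝ) / n

noncomputable def classTail (q ℓ : ℕ) : ℝ :=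
  ∑ n ∈ (Icc 1 (q ^ 2)).filter (fun n : ℕ => (n : ZMod q) = ℓ ∧ q < n), (aFac q n : ℝ) / n

lemma classTail_nonneg (q ℓ : ℕ) : 0 ≤ classTail q ℓ :=
  sum_nonneg fun _ _ => by positivity

lemma classSum_eq_add_classTail {q ℓ : ℕ} (hℓ : ℓ ∈ Icc 1 q) :
    classSum q ℓ = (ℓ.divisors.card : ℝ) / ℓ + classTail q ℓ := by
  have hℓ' := mem_Icc.1 hℓ
  have hhead : (Icc 1 (q ^ 2)).filter (fun n : ℕ => (n : ZMod q) = ℓ ∧ n ≤ q) = {ℓ} := by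
    ext n
    simp only [mem_filter, mem_Icc, mem_singleton]
    constructor
    · rintro ⟨⟨hn1, -⟩, h, hnq⟩
      exact natCast_injOn_Icc q (by simp [hn1, hnq]) hℓ h
    · rintro rfl
      exact ⟨⟨hℓ'.1, hℓ'.2.trans (Nat.le_self_pow two_ne_zero q)⟩, rfl, hℓ'.2⟩
  rw [classSum, ← sum_filter_add_sum_filter_not _ (fun n : ℕ => n ≤ q), filter_filter,
    filter_filter, hhead, sum_singleton, aFac_eq_card_divisors (by omega) hℓ'.2, classTail]
  simp only [not_le]

lemma classTail_le {q ℓ : ℕ} (hq : 0 < q) (hℓ : ℓ.Coprime q) :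
    classTail q ℓ ≤ (∑ u ∈ Icc 1 q, (u : ℝ)⁻¹) / √q := by
  set s := {p ∈ Icc 1 q ×ˢ Icc 1 q | ((p.1 * p.2 : ℕ) : ZMod q) = ℓ ∧ q < p.1 * p.2}
  have hs : ∀ p ∈ s, p.1 ∈ Icc 1 q ∧ p.2 ∈ Icc 1 q ∧
      ((p.1 * p.2 : ℕ) : ZMod q) = ℓ ∧ q < p.1 * p.2 := by
    intro p hp
    simpa only [s, mem_filter, mem_product, and_assoc] using hp
  have hfst : Set.InjOn Prod.fst (s : Set (ℕ × ℕ)) := by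
    rintro ⟨u, v⟩ huv ⟨u', v'⟩ huv' (rfl : u = u')
    obtain ⟨-, hv, hℓv, -⟩ := hs _ huv
    obtain ⟨-, hv', hℓv', -⟩ := hs _ huv'
    exact Prod.ext rfl (eq_of_natCast_mul_eq_of_coprime hℓ hv hv' hℓv hℓv')
  have hsnd : Set.InjOn Prod.snd (s : Set (ℕ × ℕ)) := by
    rintro ⟨u, v⟩ huv ⟨u', v'⟩ huv' (rfl : v = v')
    obtain ⟨hu, -, hℓu, -⟩ := hs _ huv
    obtain ⟨hu', -, hℓu', -⟩ := hs _ huv'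
    rw [mul_comm] at hℓu hℓu'
    exact Prod.ext (eq_of_natCast_mul_eq_of_coprime hℓ hu hu' hℓu hℓu') rfl
  have hinv : ∀ k ∈ Icc 1 q, 0 ≤ (k : ℝ)⁻¹ := fun _ _ => by positivity
  calc classTail q ℓ = ∑ p ∈ s, ((p.1 : ℝ) * p.2)⁻¹ := sum_filter_aFac_div_eq q _
    _ ≤ ∑ p ∈ s, ((p.1 : ℝ)⁻¹ + (p.2 : ℝ)⁻¹) / (2 * √q) := by
      refine sum_le_sum fun p hp => ?_
      obtain ⟨hu, hv, -, hqp⟩ := hs p hp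
      simp only [mem_Icc] at hu hv
      exact inv_mul_le_inv_add_inv_div_two_sqrt (Nat.cast_pos.2 hu.1) (Nat.cast_pos.2 hv.1)
        (Nat.cast_pos.2 hq) (by exact_mod_cast hqp.le)
    _ = (∑ p ∈ s, (p.1 : ℝ)⁻¹ + ∑ p ∈ s, (p.2 : ℝ)⁻¹) / (2 * √q) := by
      rw [← sum_div, sum_add_distrib]
    _ ≤ (∑ u ∈ Icc 1 q, (u : ℝ)⁻¹ + ∑ u ∈ Icc 1 q, (u : ℝ)⁻¹) / (2 * √q) := by
      gcongr
      · exact sum_comp_le_sum_of_injOn hfst (fun p hp => (hs p hp).1) hinv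
      · exact sum_comp_le_sum_of_injOn hsnd (fun p hp => (hs p hp).2.1) hinv
    _ = (∑ u ∈ Icc 1 q, (u : ℝ)⁻¹) / √q := by ring

lemma sum_classSum_le {q : ℕ} {F : Finset ℕ} (hF : F ⊆ Icc 1 q) :
    ∑ ℓ ∈ F, classSum q ℓ ≤ (∑ u ∈ Icc 1 q, (u : ℝ)⁻¹) ^ 2 :=
  calc ∑ ℓ ∈ F, classSum q ℓ
      = ∑ c ∈ F.image (Nat.cast : ℕ → ZMod q),
          ∑ n ∈ (Icc 1 (q ^ 2)).filter (fun n : ℕ => (n : ZMod q) = c), (aFac q n : ℝ) / n :=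
        by rw [sum_image ((natCast_injOn_Icc q).mono hF)]; rfl
    _ ≤ ∑ n ∈ Icc 1 (q ^ 2), (aFac q n : ℝ) / n :=
        sum_fiberwise_le_sum_of_sum_fiber_nonneg fun _ _ => sum_nonneg fun _ _ => by positivity
    _ = ∑ p ∈ Icc 1 q ×ˢ Icc 1 q, ((p.1 : ℝ) * p.2)⁻¹ := by
        simpa using sum_filter_aFac_div_eq q fun _ => True
    _ = (∑ u ∈ Icc 1 q, (u : ℝ)⁻¹) ^ 2 := by
        rw [sum_product, sq, sum_mul_sum]
        simp only [mul_inv]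

lemma sq_classSum_sub_sq_le {q ℓ : ℕ} (hq : 0 < q) (hℓ : ℓ ∈ Icc 1 q) (hcop : ℓ.Coprime q) :
    classSum q ℓ ^ 2 - ((ℓ.divisors.card : ℝ) / ℓ) ^ 2 ≤
      2 * ((∑ u ∈ Icc 1 q, (u : ℝ)⁻¹) / √q) * classSum q ℓ := by
  have hd : 0 ≤ (ℓ.divisors.card : ℝ) / ℓ := by positivity
  have htail := classTail_le hq hcop
  have htail₀ := classTail_nonneg q ℓ
  rw [classSum_eq_add_classTail hℓ]
  nlinarith

lemma sq_div_le_sq_classSum {q ℓ : ℕ} (hℓ : ℓ ∈ Icc 1 q) :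
    ((ℓ.divisors.card : ℝ) / ℓ) ^ 2 ≤ classSum q ℓ ^ 2 := by
  rw [classSum_eq_add_classTail hℓ]
  have := classTail_nonneg q ℓ
  gcongr
  linarith

/-- There is an absolute constant `C > 0` such that for all `q ≥ 3`,
`|∑_{(ℓ,q)=1, ℓ≤q} (∑_{n≤q², n≡ℓ (q)} a_q(n)/n)² − ∑_{(ℓ,q)=1, ℓ≤q} d(ℓ)²/ℓ²|
  ≤ C log⁴(q+2)/√q`, where `d` is the divisor function. -/
theorem sum_sq_aFac_sub_divisor_le : ∃ C : ℝ, 0 < C ∧ ∀ q : ℕ, 3 ≤ q →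
    |(∑ ℓ ∈ (Finset.Icc 1 q).filter (fun ℓ => Nat.Coprime ℓ q),
        (∑ n ∈ (Finset.Icc 1 (q ^ 2)).filter (fun n : ℕ => ((n : ZMod q)) = (ℓ : ZMod q)),
          (aFac q n : ℝ) / n) ^ 2) -
      ∑ ℓ ∈ (Finset.Icc 1 q).filter (fun ℓ => Nat.Coprime ℓ q),
        (ℓ.divisors.card : ℝ) ^ 2 / (ℓ : ℝ) ^ 2| ≤
      C * Real.log (q + 2) ^ 4 / Real.sqrt q := by
  refine ⟨16, by norm_num, fun q hq => ?_⟩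
  set F := (Icc 1 q).filter (fun ℓ => ℓ.Coprime q)
  set H := ∑ u ∈ Icc 1 q, (u : ℝ)⁻¹
  set L := log (q + 2)
  have hq₀ : 0 < q := by omega
  have hF : F ⊆ Icc 1 q := filter_subset _ _
  have hL : 1 ≤ L := one_le_log_add_two (by exact_mod_cast hq₀)
  have hHL : H ≤ 2 * L := sum_Icc_inv_le_two_mul_log hq₀
  have hH : 0 ≤ H := sum_nonneg fun _ _ => by positivity
  show |∑ ℓ ∈ F, classSum q ℓ ^ 2 - _| ≤ _
  simp_rw [← div_pow]
  rw [← sum_sub_distrib, abs_of_nonneg (sum_nonneg fun ℓ hℓ =>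
    sub_nonneg.2 (sq_div_le_sq_classSum (hF hℓ)))]
  calc ∑ ℓ ∈ F, (classSum q ℓ ^ 2 - ((ℓ.divisors.card : ℝ) / ℓ) ^ 2)
      ≤ ∑ ℓ ∈ F, 2 * (H / √q) * classSum q ℓ :=
        sum_le_sum fun ℓ hℓ => sq_classSum_sub_sq_le hq₀ (hF hℓ) (mem_filter.1 hℓ).2
    _ = 2 * (H / √q) * ∑ ℓ ∈ F, classSum q ℓ := (mul_sum _ _ _).symm
    _ ≤ 2 * (H / √q) * H ^ 2 := by gcongr; exact sum_classSum_le hF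
    _ = 2 * H ^ 3 / √q := by ring
    _ ≤ 16 * L ^ 4 / √q := by
        refine div_le_div_of_nonneg_right ?_ (sqrt_nonneg _)
        nlinarith [pow_le_pow_left₀ hH hHL 3, pow_le_pow_right₀ hL (by norm_num : 3 ≤ 4)]
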